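/- Asymptotic Polignac ratio for the sieve: for every even g = 2n ≥ 2, the ratio (number of γ ∈ {1,...,p#} with γ and γ+g both coprime to p#) / (number of γ ∈ {1,...,p#} with γ and γ+2 both coprime to p#) converges, as the prime p → ∞, to ∏_{q prime, q > 2, q ∣ n} (q-1)/(q-2). -/

import Mathlib

open Finset

def cntP (g m : ℕ) : ℕ :=
  ((Finset.Icc 1 m).filter (fun γ => Nat.Coprime γ m ∧ Nat.Coprime (γ + g) m)).card

def cntZ (g m : ℕ) [NeZero m] : ℕ :=
  (Finset.univ.filter (fun x : ZMod m => IsUnit x ∧ IsUnit (x + (g : ℕ)))).card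

lemma cnt_eq_cntZ (g m : ℕ) [NeZero m] : cntP g m = cntZ g m := by
  classical
  refine Finset.card_bij (fun γ _ => (γ : ZMod m)) ?_ ?_ ?_
  · intro γ hγ
    simp only [mem_filter, mem_Icc] at hγ
    simp only [mem_filter, mem_univ, true_and]
    constructor
    · exact (ZMod.isUnit_iff_coprime γ m).mpr hγ.2.1
    · rw [← Nat.cast_add]
      exact (ZMod.isUnit_iff_coprime (γ + g) m).mpr hγ.2.2
  · intro a ha b hb hab
    simp only [mem_filter, mem_Icc] at ha hb
    rw [ZMod.natCast_eq_natCast_iff] at hab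
    rcases le_total a b with h | h
    · have : m ∣ b - a := (Nat.modEq_iff_dvd' h).mp hab
      have hlt : b - a < m := by omega
      have := Nat.eq_zero_of_dvd_of_lt this hlt |>.symm
      omega
    · have : m ∣ a - b := (Nat.modEq_iff_dvd' h).mp hab.symm
      have hlt : a - b < m := by omega
      have := Nat.eq_zero_of_dvd_of_lt this hlt |>.symm
      omega
  · intro x hx
    simp only [mem_filter, mem_univ, true_and] at hx
    have hm : 1 ≤ m := Nat.one_le_iff_ne_zero.mpr (NeZero.ne m)
    by_cases h0 : x = 0
    · refine ⟨m, ?_, ?_⟩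
      · simp only [mem_filter, mem_Icc]
        refine ⟨⟨hm, le_refl m⟩, ?_, ?_⟩
        · rw [← ZMod.isUnit_iff_coprime, ZMod.natCast_self, ← h0]; exact hx.1
        · rw [← ZMod.isUnit_iff_coprime, Nat.cast_add, ZMod.natCast_self, zero_add]
          rw [h0, zero_add] at hx
          exact hx.2
      · simp [ZMod.natCast_self, h0]
    · refine ⟨x.val, ?_, ?_⟩
      · simp only [mem_filter, mem_Icc]
        have hv0 : x.val ≠ 0 := fun h => h0 (by rwa [ZMod.val_eq_zero] at h)
        have hvlt : x.val < m := ZMod.val_lt x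
        refine ⟨⟨Nat.one_le_iff_ne_zero.mpr hv0, le_of_lt hvlt⟩, ?_, ?_⟩
        · rw [← ZMod.isUnit_iff_coprime, ZMod.natCast_zmod_val]; exact hx.1
        · rw [← ZMod.isUnit_iff_coprime, Nat.cast_add, ZMod.natCast_zmod_val]; exact hx.2
      · exact ZMod.natCast_zmod_val x

lemma isUnit_prod {M N : Type*} [Monoid M] [Monoid N] (x : M × N) :
    IsUnit x ↔ IsUnit x.1 ∧ IsUnit x.2 := by
  constructor
  · intro h
    exact ⟨h.map (MonoidHom.fst M N), h.map (MonoidHom.snd M N)⟩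
  · rintro ⟨⟨u, hu⟩, ⟨v, hv⟩⟩
    refine ⟨MulEquiv.prodUnits.symm (u, v), ?_⟩
    have : ((MulEquiv.prodUnits.symm (u, v) : (M × N)ˣ) : M × N) = ((u : M), (v : N)) := rfl
    rw [this, hu, hv]

lemma cntZ_mul (g m n : ℕ) [NeZero m] [NeZero n] (h : m.Coprime n) :
    cntZ g (m * n) = cntZ g m * cntZ g n := by
  classical
  haveI : NeZero (m * n) := ⟨mul_ne_zero (NeZero.ne m) (NeZero.ne n)⟩
  unfold cntZ
  rw [← Finset.card_product]
  refine Finset.card_bij (fun x _ => ZMod.chineseRemainder h x) ?_ ?_ ?_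
  · intro x hx
    simp only [mem_filter, mem_univ, true_and] at hx
    have h1 : IsUnit (ZMod.chineseRemainder h x) := hx.1.map _
    have h2 : IsUnit (ZMod.chineseRemainder h x + ((g : ℕ) : ZMod m × ZMod n)) := by
      have := hx.2.map (ZMod.chineseRemainder h)
      rwa [map_add, map_natCast] at this
    rw [isUnit_prod] at h1
    rw [isUnit_prod] at h2
    simp only [Finset.mem_product, mem_filter, mem_univ, true_and]
    exact ⟨⟨h1.1, h2.1⟩, ⟨h1.2, h2.2⟩⟩
  · intro a _ b _ hab
    exact (ZMod.chineseRemainder h).injective hab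
  · intro y hy
    refine ⟨(ZMod.chineseRemainder h).symm y, ?_, by simp⟩
    simp only [Finset.mem_product, mem_filter, mem_univ, true_and] at hy
    simp only [mem_filter, mem_univ, true_and]
    constructor
    · have : IsUnit y := (isUnit_prod _).mpr ⟨hy.1.1, hy.2.1⟩
      exact this.map (ZMod.chineseRemainder h).symm
    · have : IsUnit (y + ((g : ℕ) : ZMod m × ZMod n)) := by
        rw [isUnit_prod _]
        constructor
        · have := hy.1.2
          simpa using this
        · have := hy.2.2
          simpa using this
      have := this.map (ZMod.chineseRemainder h).symm
      rwa [map_add, map_natCast] at this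

lemma cntZ_prime_dvd (g q : ℕ) [NeZero q] (hq : q.Prime) (hdvd : q ∣ g) :
    cntZ g q = q - 1 := by
  classical
  haveI : Fact q.Prime := ⟨hq⟩
  unfold cntZ
  have hg : ((g : ℕ) : ZMod q) = 0 := (ZMod.natCast_eq_zero_iff g q).mpr hdvd
  have : (Finset.univ.filter (fun x : ZMod q => IsUnit x ∧ IsUnit (x + (g : ℕ)))) =
      Finset.univ \ {0} := by
    ext x
    simp [hg, isUnit_iff_ne_zero, Finset.mem_sdiff]
  rw [this, Finset.card_sdiff_of_subset (by simp)]
  simp [ZMod.card]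

lemma cntZ_prime_not_dvd (g q : ℕ) [NeZero q] (hq : q.Prime) (hdvd : ¬ q ∣ g) :
    cntZ g q = q - 2 := by
  classical
  haveI : Fact q.Prime := ⟨hq⟩
  unfold cntZ
  have hg : ((g : ℕ) : ZMod q) ≠ 0 := fun h =>
    hdvd ((ZMod.natCast_eq_zero_iff g q).mp h)
  have : (Finset.univ.filter (fun x : ZMod q => IsUnit x ∧ IsUnit (x + (g : ℕ)))) =
      Finset.univ \ {0, -(g : ZMod q)} := by
    ext x
    simp only [mem_filter, mem_univ, true_and, Finset.mem_sdiff, Finset.mem_insert,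
      Finset.mem_singleton, isUnit_iff_ne_zero]
    constructor
    · rintro ⟨h1, h2⟩ (rfl | rfl)
      · exact h1 rfl
      · exact h2 (by ring)
    · intro hx
      push_neg at hx
      refine ⟨hx.1, fun h => hx.2 ?_⟩
      linear_combination h
  rw [this, Finset.card_sdiff_of_subset (by simp)]
  have hcard : ({0, -(g : ZMod q)} : Finset (ZMod q)).card = 2 := by
    rw [Finset.card_insert_of_notMem (by simp [hg]), Finset.card_singleton]
  rw [hcard]
  simp [ZMod.card]

def valQ (g q : ℕ) : ℕ := if q ∣ g then q - 1 else q - 2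

lemma cntP_one (g : ℕ) : cntP g 1 = 1 := by
  unfold cntP
  rw [Finset.Icc_self]
  simp [Nat.coprime_one_right]

lemma cntP_mul (g m n : ℕ) (hm : m ≠ 0) (hn : n ≠ 0) (h : m.Coprime n) :
    cntP g (m * n) = cntP g m * cntP g n := by
  haveI : NeZero m := ⟨hm⟩
  haveI : NeZero n := ⟨hn⟩
  haveI : NeZero (m * n) := ⟨mul_ne_zero hm hn⟩
  rw [cnt_eq_cntZ, cnt_eq_cntZ, cnt_eq_cntZ, cntZ_mul g m n h]

lemma cntP_prime (g q : ℕ) (hq : q.Prime) : cntP g q = valQ g q := by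
  haveI : NeZero q := ⟨hq.ne_zero⟩
  rw [cnt_eq_cntZ]
  unfold valQ
  split_ifs with h
  · exact cntZ_prime_dvd g q hq h
  · exact cntZ_prime_not_dvd g q hq h

lemma cntP_prod (g : ℕ) (s : Finset ℕ) (hs : ∀ q ∈ s, q.Prime) :
    cntP g (∏ q ∈ s, q) = ∏ q ∈ s, valQ g q := by
  classical
  induction s using Finset.induction_on with
  | empty => simpa using cntP_one g
  | insert _ _ ha ih =>
    rename_i a s
    rw [Finset.prod_insert ha, Finset.prod_insert ha]
    have hap : a.Prime := hs a (Finset.mem_insert_self a s)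
    have hsp : ∀ q ∈ s, q.Prime := fun q hq => hs q (Finset.mem_insert_of_mem hq)
    have hcop : a.Coprime (∏ q ∈ s, q) := by
      apply Nat.Coprime.prod_right
      intro q hq
      exact (Nat.coprime_primes hap (hsp q hq)).mpr (fun h => ha (h ▸ hq))
    have hprodne : (∏ q ∈ s, q) ≠ 0 :=
      Finset.prod_ne_zero_iff.mpr (fun q hq => (hsp q hq).ne_zero)
    rw [cntP_mul g a _ hap.ne_zero hprodne hcop, cntP_prime g a hap, ih hsp]

lemma cntP_primorial (g p : ℕ) :
    cntP g (primorial p) = ∏ q ∈ (Finset.range (p + 1)).filter Nat.Prime, valQ g q := by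
  rw [primorial]
  exact cntP_prod g _ (fun q hq => (Finset.mem_filter.mp hq).2)


/-- Asymptotic Polignac ratio for the sieve: as the prime p → ∞ (p = k-th prime),
the ratio of the population of the gap g = 2n to the population of the gap 2 in the
cycle of gaps mod p# converges to ∏_{q>2, q∣n} (q-1)/(q-2). -/
theorem stmt_10 (n : ℕ) (hn : 1 ≤ n) :
    Filter.Tendsto
      (fun k : ℕ =>
        (((Finset.Icc 1 (primorial (Nat.nth Nat.Prime k))).filter
            (fun γ => Nat.Coprime γ (primorial (Nat.nth Nat.Prime k)) ∧
              Nat.Coprime (γ + 2 * n) (primorial (Nat.nth Nat.Prime k)))).card : ℝ) /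
        (((Finset.Icc 1 (primorial (Nat.nth Nat.Prime k))).filter
            (fun γ => Nat.Coprime γ (primorial (Nat.nth Nat.Prime k)) ∧
              Nat.Coprime (γ + 2) (primorial (Nat.nth Nat.Prime k)))).card : ℝ))
      Filter.atTop
      (nhds (∏ q ∈ n.primeFactors.filter (fun q => 2 < q),
        ((q : ℝ) - 1) / ((q : ℝ) - 2))) := by
  apply Filter.Tendsto.congr' _ tendsto_const_nhds
  rw [Filter.EventuallyEq, Filter.eventually_atTop]
  refine ⟨n, fun k hk => ?_⟩
  have hnth : n ≤ Nat.nth Nat.Prime k :=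
    le_trans hk (Nat.nth_strictMono Nat.infinite_setOf_prime).le_apply
  set S : Finset ℕ := (Finset.range (Nat.nth Nat.Prime k + 1)).filter Nat.Prime with hS
  set T : Finset ℕ := n.primeFactors.filter (fun q => 2 < q) with hT
  have h1 : (((Finset.Icc 1 (primorial (Nat.nth Nat.Prime k))).filter
      (fun γ => Nat.Coprime γ (primorial (Nat.nth Nat.Prime k)) ∧
        Nat.Coprime (γ + 2 * n) (primorial (Nat.nth Nat.Prime k)))).card)
      = ∏ q ∈ S, valQ (2 * n) q := cntP_primorial (2 * n) _
  have h2 : (((Finset.Icc 1 (primorial (Nat.nth Nat.Prime k))).filter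
      (fun γ => Nat.Coprime γ (primorial (Nat.nth Nat.Prime k)) ∧
        Nat.Coprime (γ + 2) (primorial (Nat.nth Nat.Prime k)))).card)
      = ∏ q ∈ S, valQ 2 q := cntP_primorial 2 _
  rw [h1, h2, Nat.cast_prod, Nat.cast_prod, ← Finset.prod_div_distrib]
  have hsub : T ⊆ S := by
    intro q hq
    rw [hT, Finset.mem_filter] at hq
    have hqp : q.Prime := Nat.prime_of_mem_primeFactors hq.1
    have hqn : q ∣ n := Nat.dvd_of_mem_primeFactors hq.1
    have : q ≤ n := Nat.le_of_dvd hn hqn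
    rw [hS, Finset.mem_filter, Finset.mem_range]
    exact ⟨Nat.lt_succ_of_le (le_trans this hnth), hqp⟩
  rw [← Finset.prod_subset hsub (fun q hqS hqT => ?_)]
  · apply Finset.prod_congr rfl
    intro q hq
    rw [hT, Finset.mem_filter] at hq
    have hqp : q.Prime := Nat.prime_of_mem_primeFactors hq.1
    have hqn : q ∣ n := Nat.dvd_of_mem_primeFactors hq.1
    have hq2 : 2 < q := hq.2
    have hv1 : valQ (2 * n) q = q - 1 := by
      unfold valQ
      rw [if_pos (hqn.mul_left 2)]
    have hv2 : valQ 2 q = q - 2 := by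
      unfold valQ
      rw [if_neg (fun h => by have := Nat.le_of_dvd (by norm_num) h; omega)]
    rw [hv1, hv2, Nat.cast_sub (by omega), Nat.cast_sub (by omega)]
    norm_num
  · -- q ∈ S \ T : factor is 1
    have hqp : q.Prime := (Finset.mem_filter.mp (hS ▸ hqS)).2
    by_cases hq2 : q = 2
    · subst hq2
      have hv1 : valQ (2 * n) 2 = 1 := by unfold valQ; rw [if_pos ⟨n, rfl⟩]
      have hv2 : valQ 2 2 = 1 := by unfold valQ; rw [if_pos dvd_rfl]
      rw [hv1, hv2]; norm_num
    · have hq2' : 2 < q := lt_of_le_of_ne hqp.two_le (Ne.symm hq2)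
      have hqnotn : ¬ q ∣ n := by
        intro hdvd
        apply hqT
        rw [hT, Finset.mem_filter]
        exact ⟨Nat.mem_primeFactors.mpr ⟨hqp, hdvd, by omega⟩, hq2'⟩
      have hv1 : valQ (2 * n) q = q - 2 := by
        unfold valQ
        rw [if_neg]
        intro hdvd
        rcases (Nat.Prime.dvd_mul hqp).mp hdvd with h | h
        · have := Nat.le_of_dvd (by norm_num) h; omega
        · exact hqnotn h
      have hv2 : valQ 2 q = q - 2 := by
        unfold valQ
        rw [if_neg]
        intro hdvd
        have := Nat.le_of_dvd (by norm_num) hdvd; omega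
      rw [hv1, hv2]
      have : ((q - 2 : ℕ) : ℝ) ≠ 0 := by
        rw [Nat.cast_ne_zero]; omega
      exact div_self this
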